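/- arXiv:2502.06604 — 10 statements merged into one kernel-verified Lean document; each statement's English description precedes it below -/
import Mathlib

section
/- Let p_c, p_n, k be positive reals and α ∈ [0,1] with α ≤ k·p_n/(p_c + k·p_n). Then for every ε with 0 < ε < p_c, the loss gap satisfies f(ε) ≤ 0; equivalently, (1−α)·(−log(p_c − ε)) + α·(−log(p_n + ε/k)) ≥ (1−α)·(−log p_c) + α·(−log p_n). (Proposition 1, part 1: when the noise proportion α is sufficiently small, the global minimum of the NTP loss on the mixed distribution P^m is not affected by noise.) -/
/-- Proposition 1, part 1: if `α ≤ k·pn/(pc + k·pn)`, then for every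
`0 < ε < pc` the loss gap `f(ε) = (1-α)·log((pc-ε)/pc) + α·log((pn+ε/k)/pn)` is `≤ 0`;
equivalently, the noisy model's mixed loss is at least the clean model's mixed loss. -/
theorem loss_gap_nonpos_of_small_alpha
    (α pc pn k : ℝ) (hpc : 0 < pc) (hpn : 0 < pn) (hk : 0 < k)
    (hα : α ∈ Set.Icc (0 : ℝ) 1)
    (hαle : α ≤ k * pn / (pc + k * pn)) :
    ∀ ε : ℝ, 0 < ε → ε < pc →
      ((1 - α) * Real.log ((pc - ε) / pc) + α * Real.log ((pn + ε / k) / pn) ≤ 0 ∧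
       (1 - α) * (-Real.log (pc - ε)) + α * (-Real.log (pn + ε / k))
         ≥ (1 - α) * (-Real.log pc) + α * (-Real.log pn)) := by
  obtain ⟨hα0, hα1⟩ := hα
  intro ε hε0 hεpc
  have hpcε : 0 < pc - ε := by linarith
  have hpnε : 0 < pn + ε / k := by positivity
  have h1 : Real.log ((pc - ε) / pc) ≤ (pc - ε) / pc - 1 :=
    Real.log_le_sub_one_of_pos (by positivity)
  have h2 : Real.log ((pn + ε / k) / pn) ≤ (pn + ε / k) / pn - 1 :=
    Real.log_le_sub_one_of_pos (by positivity)
  have hden : 0 < pc + k * pn := by positivity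
  have hkey : α * pc ≤ (1 - α) * (k * pn) := by
    nlinarith [(le_div_iff₀ hden).mp hαle]
  have hA : (pc - ε) / pc - 1 = -(ε / pc) := by field_simp; ring
  have hB : (pn + ε / k) / pn - 1 = ε / (k * pn) := by field_simp; ring
  have hf : (1 - α) * Real.log ((pc - ε) / pc) + α * Real.log ((pn + ε / k) / pn)
      ≤ (1 - α) * (-(ε / pc)) + α * (ε / (k * pn)) := by
    rw [← hA, ← hB]
    have := mul_le_mul_of_nonneg_left h1 (by linarith : (0:ℝ) ≤ 1 - α)
    have := mul_le_mul_of_nonneg_left h2 hα0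
    linarith
  have hrhs : (1 - α) * (-(ε / pc)) + α * (ε / (k * pn)) ≤ 0 := by
    rw [div_eq_mul_inv, div_eq_mul_inv]
    have hpci : 0 < pc⁻¹ := by positivity
    have hkpni : 0 < (k * pn)⁻¹ := by positivity
    have h : α * (k * pn)⁻¹ ≤ (1 - α) * pc⁻¹ := by
      rw [← div_eq_mul_inv, ← div_eq_mul_inv, div_le_div_iff₀ (by positivity) hpc]
      nlinarith
    nlinarith
  have hmain : (1 - α) * Real.log ((pc - ε) / pc) + α * Real.log ((pn + ε / k) / pn) ≤ 0 :=
    le_trans hf hrhs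
  refine ⟨hmain, ?_⟩
  rw [Real.log_div (by linarith) hpc.ne', Real.log_div hpnε.ne' hpn.ne'] at hmain
  nlinarith [hmain]
end

section
/- Let p_c, p_n, k be positive reals and α ∈ (0,1) with α > k·p_n/(p_c + k·p_n), and set η = α·p_c − (1−α)·k·p_n (so η > 0). Then for every ε with 0 < ε < η, the loss gap satisfies f(ε) > 0; equivalently, (1−α)·(−log(p_c − ε)) + α·(−log(p_n + ε/k)) < (1−α)·(−log p_c) + α·(−log p_n). (Proposition 1, part 2: when α is large enough, the impact of noise on the optimal hypothesis is at least α·p_c − (1−α)·k·p_n.) -/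
/-- Proposition 1, part 2: if `α > k·pn/(pc + k·pn)` with `α ∈ (0,1)`,
then `η = α·pc - (1-α)·k·pn > 0` and for every `0 < ε < η` the loss gap
`f(ε) = (1-α)·log((pc-ε)/pc) + α·log((pn+ε/k)/pn)` is `> 0`; equivalently, the noisy
model's mixed loss is strictly less than the clean model's mixed loss. -/
theorem loss_gap_pos_of_large_alpha
    (α pc pn k : ℝ) (hpc : 0 < pc) (hpn : 0 < pn) (hk : 0 < k)
    (hα : α ∈ Set.Ioo (0 : ℝ) 1)
    (hαgt : α > k * pn / (pc + k * pn)) :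
    0 < α * pc - (1 - α) * k * pn ∧
    ∀ ε : ℝ, 0 < ε → ε < α * pc - (1 - α) * k * pn →
      ((1 - α) * Real.log ((pc - ε) / pc) + α * Real.log ((pn + ε / k) / pn) > 0 ∧
       (1 - α) * (-Real.log (pc - ε)) + α * (-Real.log (pn + ε / k))
         < (1 - α) * (-Real.log pc) + α * (-Real.log pn)) := by
  obtain ⟨hα0, hα1⟩ := hα
  have hden0 : 0 < pc + k * pn := by positivity
  have hη : 0 < α * pc - (1 - α) * k * pn := by
    have h := (div_lt_iff₀ hden0).mp hαgt
    nlinarith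
  refine ⟨hη, fun ε hε hεη => ?_⟩
  have hpcε : 0 < pc - ε := by nlinarith
  have hpnε : 0 < pn + ε / k := by positivity
  -- log pc - log (pc - ε) < ε / (pc - ε)
  have h1 : Real.log pc - Real.log (pc - ε) < ε / (pc - ε) := by
    have hx : (0:ℝ) < pc / (pc - ε) := by positivity
    have hne : pc / (pc - ε) ≠ 1 := by
      intro h
      have : pc = pc - ε := by field_simp at h; linarith
      linarith
    have := Real.log_lt_sub_one_of_pos hx hne
    rw [Real.log_div (ne_of_gt hpc) (ne_of_gt hpcε)] at this
    have heq : pc / (pc - ε) - 1 = ε / (pc - ε) := by field_simp; ring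
    linarith [heq ▸ this]
  -- log pn - log (pn + ε/k) ≤ -((ε/k) / (pn + ε/k))
  have h2 : Real.log pn - Real.log (pn + ε / k) ≤ -((ε / k) / (pn + ε / k)) := by
    have hx : (0:ℝ) < pn / (pn + ε / k) := by positivity
    have := Real.log_le_sub_one_of_pos hx
    rw [Real.log_div (ne_of_gt hpn) (ne_of_gt hpnε)] at this
    have heq : pn / (pn + ε / k) - 1 = -((ε / k) / (pn + ε / k)) := by field_simp; ring
    linarith [heq ▸ this]
  -- key comparison of the two bounds
  have hkpn : 0 < k * pn + ε := by positivity
  have key : (1 - α) * (ε / (pc - ε)) ≤ α * ((ε / k) / (pn + ε / k)) := by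
    have heq : (ε / k) / (pn + ε / k) = ε / (k * pn + ε) := by
      rw [div_div, div_eq_div_iff (by positivity) (ne_of_gt hkpn)]
      field_simp
    rw [heq, mul_div_assoc', mul_div_assoc', div_le_div_iff₀ hpcε hkpn]
    nlinarith [mul_pos hε (sub_pos.mpr hεη)]
  have h1α : 0 < 1 - α := by linarith
  have A : (1 - α) * (Real.log (pc - ε) - Real.log pc) > -((1 - α) * (ε / (pc - ε))) := by
    nlinarith [mul_lt_mul_of_pos_left h1 h1α]
  have B : α * (Real.log (pn + ε / k) - Real.log pn) ≥ α * ((ε / k) / (pn + ε / k)) := by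
    nlinarith [mul_le_mul_of_nonneg_left h2 (le_of_lt hα0)]
  have hgap : (1 - α) * Real.log ((pc - ε) / pc) + α * Real.log ((pn + ε / k) / pn) > 0 := by
    rw [Real.log_div (ne_of_gt hpcε) (ne_of_gt hpc),
        Real.log_div (ne_of_gt hpnε) (ne_of_gt hpn)]
    linarith
  refine ⟨hgap, ?_⟩
  rw [Real.log_div (ne_of_gt hpcε) (ne_of_gt hpc),
      Real.log_div (ne_of_gt hpnε) (ne_of_gt hpn)] at hgap
  nlinarith [hgap]
end

section
/- Let p_c, p_n, k be positive reals and α ∈ (0, 1/3) with k > α·(1−3α)·p_c/((1−α)·(2−3α)·p_n), and set η = α·p_c − (1−α)·k·p_n; assume η > 0. Then for every ε with 3η ≤ ε < p_c, the loss gap satisfies f(ε) < 0; equivalently, (1−α)·(−log(p_c − ε)) + α·(−log(p_n + ε/k)) > (1−α)·(−log p_c) + α·(−log p_n). (Proposition 1, part 3, first case: when α < 1/3 and k is sufficiently large, the effect of noise, ε, is less than 3η.) -/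
open Real Set

/-- Key lemma: the loss gap at `ε = 3η` is negative, where `q = k·pn`. -/
private lemma key_gap_lemma (α pc q : ℝ) (hpc : 0 < pc) (hq : 0 < q)
    (hα0 : 0 < α) (hα3 : α < 1/3)
    (hη : 0 < α * pc - (1 - α) * q)
    (h3 : 3 * (α * pc - (1 - α) * q) < pc)
    (hstar : (2 - 3*α) * (α * pc - (1 - α) * q) < α * pc) :
    (1 - α) * Real.log ((pc - 3 * (α * pc - (1 - α) * q)) / pc)
      + α * Real.log ((q + 3 * (α * pc - (1 - α) * q)) / q) < 0 := by
  set η := α * pc - (1 - α) * q with hηdef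
  have hα1 : α < 1 := by linarith
  have hc : (0:ℝ) < 2 - 3*α := by linarith
  have hαpc : η < α * pc := by nlinarith
  set H : ℝ → ℝ := fun x => (1 - α) * Real.log (pc - 3*x)
      + α * Real.log (α*pc + (2-3*α)*x) - α * Real.log (α*pc - x) with hHdef
  have harg1 : ∀ x ∈ Icc (0:ℝ) η, 0 < pc - 3*x := by
    intro x hx; rcases hx with ⟨h1, h2⟩; nlinarith
  have harg2 : ∀ x ∈ Icc (0:ℝ) η, 0 < α*pc + (2-3*α)*x := by
    intro x hx; rcases hx with ⟨h1, h2⟩; nlinarith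
  have harg3 : ∀ x ∈ Icc (0:ℝ) η, 0 < α*pc - x := by
    intro x hx; rcases hx with ⟨h1, h2⟩; nlinarith
  have hderiv : ∀ x ∈ Ioo (0:ℝ) η, HasDerivAt H
      ((1-α) * (-3/(pc-3*x)) + α * ((2-3*α)/(α*pc+(2-3*α)*x))
        - α * (-1/(α*pc-x))) x := by
    intro x hx
    have hxmem : x ∈ Icc (0:ℝ) η := ⟨hx.1.le, hx.2.le⟩
    have d1 : HasDerivAt (fun y : ℝ => pc - 3*y) (-3) x := by
      simpa using ((hasDerivAt_id' x).const_mul 3).const_sub pc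
    have d2 : HasDerivAt (fun y : ℝ => α*pc + (2-3*α)*y) (2-3*α) x := by
      simpa using ((hasDerivAt_id' x).const_mul (2-3*α)).const_add (α*pc)
    have d3 : HasDerivAt (fun y : ℝ => α*pc - y) (-1) x := by
      exact (hasDerivAt_id' x).const_sub (α*pc)
    have l1 := (d1.log (harg1 x hxmem).ne')
    have l2 := (d2.log (harg2 x hxmem).ne')
    have l3 := (d3.log (harg3 x hxmem).ne')
    exact ((l1.const_mul (1-α)).add (l2.const_mul α)).sub (l3.const_mul α)
  have hneg : ∀ x ∈ Ioo (0:ℝ) η,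
      (1-α) * (-3/(pc-3*x)) + α * ((2-3*α)/(α*pc+(2-3*α)*x))
        - α * (-1/(α*pc-x)) < 0 := by
    intro x hx
    have hxmem : x ∈ Icc (0:ℝ) η := ⟨hx.1.le, hx.2.le⟩
    have p1 := harg1 x hxmem
    have p2 := harg2 x hxmem
    have p3 := harg3 x hxmem
    have hnum : 0 < 3*(1-α)*x*(α*pc-(2-3*α)*x) := by
      have hsub : 0 < α*pc - (2-3*α)*x := by nlinarith [hx.1, hx.2]
      have hx0 := hx.1
      exact mul_pos (mul_pos (by linarith : (0:ℝ) < 3*(1-α)) hx0) hsub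
    have heq : (1-α) * (-3/(pc-3*x)) + α * ((2-3*α)/(α*pc+(2-3*α)*x))
        - α * (-1/(α*pc-x))
        = -(3*(1-α)*x*(α*pc-(2-3*α)*x)) /
            ((pc-3*x) * ((α*pc+(2-3*α)*x) * (α*pc-x))) := by
      rw [mul_div_assoc', mul_div_assoc', mul_div_assoc', div_add_div _ _ p1.ne' p2.ne',
        div_sub_div _ _ (by positivity) p3.ne', div_eq_div_iff (by positivity) (by positivity)]
      ring
    rw [heq]
    apply div_neg_of_neg_of_pos
    · linarith
    · positivity
  have hcont : ContinuousOn H (Icc 0 η) := by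
    have c1 : ContinuousOn (fun x : ℝ => pc - 3*x) (Icc 0 η) :=
      (continuous_const.sub (continuous_const.mul continuous_id)).continuousOn
    have c2 : ContinuousOn (fun x : ℝ => α*pc + (2-3*α)*x) (Icc 0 η) :=
      (continuous_const.add (continuous_const.mul continuous_id)).continuousOn
    have c3 : ContinuousOn (fun x : ℝ => α*pc - x) (Icc 0 η) :=
      (continuous_const.sub continuous_id).continuousOn
    exact ((continuousOn_const.mul (c1.log fun x hx => (harg1 x hx).ne')).add
      (continuousOn_const.mul (c2.log fun x hx => (harg2 x hx).ne'))).sub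
      (continuousOn_const.mul (c3.log fun x hx => (harg3 x hx).ne'))
  have hanti : StrictAntiOn H (Icc 0 η) := by
    apply strictAntiOn_of_deriv_neg (convex_Icc 0 η) hcont
    intro x hx
    rw [interior_Icc] at hx
    rw [(hderiv x hx).deriv]
    exact hneg x hx
  have hlt : H η < H 0 :=
    hanti (left_mem_Icc.mpr hη.le) (right_mem_Icc.mpr hη.le) hη
  have hH0 : H 0 = (1-α) * Real.log pc := by
    simp [hHdef]
  have hHη : H η = (1-α) * Real.log (pc-3*η) + α * Real.log (α*pc + (2-3*α)*η)
      - α * Real.log (α*pc - η) := rfl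
  have e1 : α*pc + (2-3*α)*η = (1-α)*(q+3*η) := by rw [hηdef]; ring
  have e2 : α*pc - η = (1-α)*q := by rw [hηdef]; ring
  have hq3 : 0 < q + 3*η := by nlinarith
  have l1 : Real.log ((1-α)*(q+3*η)) = Real.log (1-α) + Real.log (q+3*η) :=
    Real.log_mul (by linarith) hq3.ne'
  have l2 : Real.log ((1-α)*q) = Real.log (1-α) + Real.log q :=
    Real.log_mul (by linarith) hq.ne'
  rw [Real.log_div (by linarith : pc - 3*η ≠ 0) hpc.ne',
    Real.log_div hq3.ne' hq.ne']
  rw [hHη, hH0, e1, e2, l1, l2] at hlt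
  nlinarith [hlt]

/-- Proposition 1, part 3, first case: for `α ∈ (0, 1/3)` with
`k > α·(1-3α)·pc/((1-α)·(2-3α)·pn)` and `η = α·pc - (1-α)·k·pn > 0`, every
`ε` with `3η ≤ ε < pc` has loss gap `f(ε) < 0`; equivalently, the noisy model's
mixed loss strictly exceeds the clean model's mixed loss. -/
theorem loss_gap_neg_beyond_three_eta
    (α pc pn k : ℝ) (hpc : 0 < pc) (hpn : 0 < pn) (hk : 0 < k)
    (hα : α ∈ Set.Ioo (0 : ℝ) (1 / 3))
    (hkgt : k > α * (1 - 3 * α) * pc / ((1 - α) * (2 - 3 * α) * pn))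
    (hη : 0 < α * pc - (1 - α) * k * pn) :
    ∀ ε : ℝ, 3 * (α * pc - (1 - α) * k * pn) ≤ ε → ε < pc →
      ((1 - α) * Real.log ((pc - ε) / pc) + α * Real.log ((pn + ε / k) / pn) < 0 ∧
       (1 - α) * (-Real.log (pc - ε)) + α * (-Real.log (pn + ε / k))
         > (1 - α) * (-Real.log pc) + α * (-Real.log pn)) := by
  intro ε hε3 hεpc
  obtain ⟨hα0, hα3⟩ := hα
  have hα3' : α < 1/3 := hα3
  have hα1 : α < 1 := by linarith
  have hc : (0:ℝ) < 2 - 3*α := by linarith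
  set η := α * pc - (1 - α) * k * pn with hηdef
  have hq : 0 < k * pn := mul_pos hk hpn
  have hηq : 0 < α * pc - (1 - α) * (k * pn) := by
    rw [← mul_assoc]; exact hη
  have h3pc : 3 * (α * pc - (1 - α) * (k * pn)) < pc := by
    rw [← mul_assoc]; exact lt_of_le_of_lt hε3 hεpc
  have hden : 0 < (1 - α) * (2 - 3 * α) * pn :=
    mul_pos (mul_pos (by linarith) hc) hpn
  have hkgt' : α * (1 - 3 * α) * pc < k * ((1 - α) * (2 - 3 * α) * pn) :=
    (div_lt_iff₀ hden).mp hkgt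
  have hstar : (2 - 3*α) * (α * pc - (1 - α) * (k * pn)) < α * pc := by
    nlinarith [hkgt']
  have hkey := key_gap_lemma α pc (k * pn) hpc hq hα0 hα3' hηq h3pc hstar
  -- rewrite key in terms of η and pn, k
  have hη' : α * pc - (1 - α) * (k * pn) = η := by rw [hηdef]; ring
  rw [hη'] at hkey
  have hconv : (k * pn + 3 * η) / (k * pn) = (pn + 3 * η / k) / pn := by
    field_simp
  rw [hconv] at hkey
  -- positivity facts
  have hη0 : 0 < η := hη
  have hεpos : 0 < ε := lt_of_lt_of_le (by linarith) hε3
  have hpcε : 0 < pc - ε := by linarith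
  have hpc3η : 0 < pc - 3*η := by
    have := lt_of_le_of_lt hε3 hεpc
    linarith
  have hpnε : 0 < pn + ε / k := by positivity
  have hpn3η : 0 < pn + 3 * η / k := by positivity
  -- chord (concavity) step
  set t := 3 * η / ε with htdef
  have ht0 : 0 < t := div_pos (by linarith) hεpos
  have ht1 : t ≤ 1 := (div_le_one hεpos).mpr hε3
  have htε : t * ε = 3 * η := div_mul_cancel₀ _ hεpos.ne'
  have hclog := strictConcaveOn_log_Ioi.concaveOn
  have c1 : t • Real.log ((pc - ε) / pc) + (1 - t) • Real.log 1
      ≤ Real.log (t • ((pc - ε) / pc) + (1 - t) • (1:ℝ)) :=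
    hclog.2 (mem_Ioi.mpr (div_pos hpcε hpc)) (mem_Ioi.mpr one_pos)
      ht0.le (by linarith) (by ring)
  have c2 : t • Real.log ((pn + ε / k) / pn) + (1 - t) • Real.log 1
      ≤ Real.log (t • ((pn + ε / k) / pn) + (1 - t) • (1:ℝ)) :=
    hclog.2 (mem_Ioi.mpr (div_pos hpnε hpn)) (mem_Ioi.mpr one_pos)
      ht0.le (by linarith) (by ring)
  have pt1 : t • ((pc - ε) / pc) + (1 - t) • (1:ℝ) = (pc - 3*η) / pc := by
    rw [smul_eq_mul, smul_eq_mul, ← htε]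
    field_simp
    ring
  have pt2 : t • ((pn + ε / k) / pn) + (1 - t) • (1:ℝ) = (pn + 3 * η / k) / pn := by
    rw [smul_eq_mul, smul_eq_mul, ← htε]
    field_simp
    ring
  rw [pt1, Real.log_one, smul_zero, add_zero, smul_eq_mul] at c1
  rw [pt2, Real.log_one, smul_zero, add_zero, smul_eq_mul] at c2
  -- combine: t * f(ε) ≤ f(3η) < 0
  have m1 : (1 - α) * (t * Real.log ((pc - ε) / pc))
      ≤ (1 - α) * Real.log ((pc - 3*η) / pc) :=
    mul_le_mul_of_nonneg_left c1 (by linarith)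
  have m2 : α * (t * Real.log ((pn + ε / k) / pn))
      ≤ α * Real.log ((pn + 3 * η / k) / pn) :=
    mul_le_mul_of_nonneg_left c2 hα0.le
  have htf : t * ((1 - α) * Real.log ((pc - ε) / pc)
      + α * Real.log ((pn + ε / k) / pn)) < 0 := by
    have expand : t * ((1 - α) * Real.log ((pc - ε) / pc)
        + α * Real.log ((pn + ε / k) / pn))
        = (1 - α) * (t * Real.log ((pc - ε) / pc))
          + α * (t * Real.log ((pn + ε / k) / pn)) := by ring
    rw [expand]
    linarith [m1, m2, hkey]
  have hmain : (1 - α) * Real.log ((pc - ε) / pc)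
      + α * Real.log ((pn + ε / k) / pn) < 0 := by
    by_contra h
    push_neg at h
    exact absurd (mul_nonneg ht0.le h) (not_le.mpr htf)
  refine ⟨hmain, ?_⟩
  rw [Real.log_div hpcε.ne' hpc.ne', Real.log_div hpnε.ne' hpn.ne'] at hmain
  linarith
end

section
/- Let p_c, p_n, k be positive reals and α ∈ (1/2, 1) with α > k·p_n/(p_c + k·p_n) and k > (2α−1)·p_c/(2·(1−α)·p_n), and set η = α·p_c − (1−α)·k·p_n (so η > 0). Then for every ε with 2η ≤ ε < p_c, the loss gap satisfies f(ε) < 0; equivalently, (1−α)·(−log(p_c − ε)) + α·(−log(p_n + ε/k)) > (1−α)·(−log p_c) + α·(−log p_n). (Proposition 1, part 3, second case: when α > max(k·p_n/(p_c + k·p_n), 1/2) and k is sufficiently large, the effect of noise, ε, does not exceed 2η.) -/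
private lemma hasDerivAt_F (α pc pn k : ℝ) (hk : 0 < k) {ε : ℝ}
    (h1 : ε < pc) (h2 : 0 < k * pn + ε) :
    HasDerivAt (fun x => (1 - α) * Real.log (pc - x) + α * Real.log (pn + x / k))
      (-(1 - α) / (pc - ε) + α / (k * pn + ε)) ε := by
  have hpe : (0:ℝ) < pc - ε := by linarith
  have h2' : 0 < pn + ε / k := by
    have h : pn + ε / k = (k * pn + ε) / k := by field_simp
    rw [h]; positivity
  have hd1 : HasDerivAt (fun x : ℝ => pc - x) (-1) ε := by
    simpa using (hasDerivAt_id ε).const_sub pc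
  have hd2 : HasDerivAt (fun x : ℝ => pn + x / k) (1 / k) ε := by
    simpa using ((hasDerivAt_id ε).div_const k).const_add pn
  have hl1 := (hd1.log hpe.ne').const_mul (1 - α)
  have hl2 := (hd2.log h2'.ne').const_mul α
  have h3 : pn + ε / k = (k * pn + ε) / k := by field_simp
  refine (hl1.add hl2).congr_deriv ?_
  rw [h3]
  field_simp

private lemma key (α pc pn k : ℝ) (hpc : 0 < pc) (hpn : 0 < pn) (hk : 0 < k)
    (hahalf : 1/2 < α) (hα1 : α < 1)
    (hη : 0 < α * pc - (1 - α) * k * pn)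
    (h2η : 2 * (α * pc - (1 - α) * k * pn) < pc)
    (ε : ℝ) (hε1 : 2 * (α * pc - (1 - α) * k * pn) ≤ ε) (hε2 : ε < pc) :
    (1 - α) * Real.log (pc - ε) + α * Real.log (pn + ε / k)
      < (1 - α) * Real.log pc + α * Real.log pn := by
  set η := α * pc - (1 - α) * k * pn with hηdef
  set F : ℝ → ℝ := fun x => (1 - α) * Real.log (pc - x) + α * Real.log (pn + x / k)
    with hFdef
  -- Step A : F (2η) < F 0
  set G : ℝ → ℝ := fun u => F (η + u) - F (η - u) with hGdef
  have hGderiv : ∀ u ∈ Set.Icc (0:ℝ) η, HasDerivAt G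
      ((-(1 - α) / (pc - (η + u)) + α / (k * pn + (η + u)))
        + (-(1 - α) / (pc - (η - u)) + α / (k * pn + (η - u)))) u := by
    intro u hu
    obtain ⟨hu0, huη⟩ := hu
    have h1p : η + u < pc := by linarith
    have h2p : 0 < k * pn + (η + u) := by positivity
    have h1m : η - u < pc := by linarith
    have h2m : 0 < k * pn + (η - u) := by nlinarith
    have hplus : HasDerivAt (fun u : ℝ => η + u) 1 u := by
      simpa using (hasDerivAt_id u).const_add η
    have hminus : HasDerivAt (fun u : ℝ => η - u) (-1) u := by
      simpa using (hasDerivAt_id u).const_sub η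
    have hp := (hasDerivAt_F α pc pn k hk h1p h2p).comp u hplus
    have hm := (hasDerivAt_F α pc pn k hk h1m h2m).comp u hminus
    have := hp.sub hm
    exact this.congr_deriv (by ring)
  have hGanti : StrictAntiOn G (Set.Icc 0 η) := by
    apply strictAntiOn_of_deriv_neg (convex_Icc _ _)
    · intro u hu
      exact (hGderiv u hu).continuousAt.continuousWithinAt
    · intro u hu
      rw [interior_Icc] at hu
      obtain ⟨hu0, huη⟩ := hu
      rw [(hGderiv u ⟨hu0.le, huη.le⟩).deriv]
      have h1p : (0:ℝ) < pc - (η + u) := by linarith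
      have h2p : 0 < k * pn + (η + u) := by positivity
      have h1m : (0:ℝ) < pc - (η - u) := by linarith
      have h2m : 0 < k * pn + (η - u) := by nlinarith
      have ep : -(1 - α) / (pc - (η + u)) + α / (k * pn + (η + u))
          = -u / ((pc - (η + u)) * (k * pn + (η + u))) := by
        rw [div_add_div _ _ h1p.ne' h2p.ne', div_eq_div_iff (mul_pos h1p h2p).ne' (mul_pos h1p h2p).ne']
        rw [hηdef]; ring
      have em : -(1 - α) / (pc - (η - u)) + α / (k * pn + (η - u))
          = u / ((pc - (η - u)) * (k * pn + (η - u))) := by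
        rw [div_add_div _ _ h1m.ne' h2m.ne', div_eq_div_iff (mul_pos h1m h2m).ne' (mul_pos h1m h2m).ne']
        rw [hηdef]; ring
      rw [ep, em, neg_div]
      have hDp : 0 < (pc - (η + u)) * (k * pn + (η + u)) := mul_pos h1p h2p
      have hDm : 0 < (pc - (η - u)) * (k * pn + (η - u)) := mul_pos h1m h2m
      have h2a : (0:ℝ) < 2 * α - 1 := by linarith
      have hdiff : (pc - (η - u)) * (k * pn + (η - u))
          - (pc - (η + u)) * (k * pn + (η + u))
          = 2 * u * ((2 * α - 1) * (pc + k * pn)) := by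
        rw [hηdef]; ring
      have hlt : (pc - (η + u)) * (k * pn + (η + u))
          < (pc - (η - u)) * (k * pn + (η - u)) := by
        nlinarith [mul_pos (mul_pos (by linarith : (0:ℝ) < 2 * u) h2a)
          (by positivity : (0:ℝ) < pc + k * pn)]
      have := div_lt_div_of_pos_left hu0 hDp hlt
      linarith
  have hGlt : G η < G 0 := hGanti ⟨le_refl 0, hη.le⟩ ⟨hη.le, le_refl η⟩ hη
  have hG0 : G 0 = 0 := by simp [hGdef]
  have hGη : G η = F (2 * η) - F 0 := by
    have : η + η = 2 * η := by ring
    simp [hGdef, this]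
  have hstepA : F (2 * η) < F 0 := by rw [hGη, hG0] at hGlt; linarith
  -- Step B : F ε ≤ F (2η)
  have hstepB : F ε ≤ F (2 * η) := by
    rcases eq_or_lt_of_le hε1 with h | h
    · rw [← h]
    · have hanti : StrictAntiOn F (Set.Icc (2 * η) ε) := by
        apply strictAntiOn_of_deriv_neg (convex_Icc _ _)
        · intro x hx
          obtain ⟨hx1, hx2⟩ := hx
          have h1 : x < pc := by linarith
          have h2 : 0 < k * pn + x := by nlinarith
          exact (hasDerivAt_F α pc pn k hk h1 h2).continuousAt.continuousWithinAt
        · intro x hx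
          rw [interior_Icc] at hx
          obtain ⟨hx1, hx2⟩ := hx
          have h1 : x < pc := by linarith
          have h2 : 0 < k * pn + x := by nlinarith
          rw [(hasDerivAt_F α pc pn k hk h1 h2).deriv, neg_div]
          have hpe : (0:ℝ) < pc - x := by linarith
          have : α / (k * pn + x) < (1 - α) / (pc - x) := by
            rw [div_lt_div_iff₀ h2 hpe]
            rw [hηdef] at hx1
            nlinarith
          linarith
      exact (hanti ⟨le_refl _, h.le⟩ ⟨h.le, le_refl ε⟩ h).le
  -- conclude
  have hF0 : F 0 = (1 - α) * Real.log pc + α * Real.log pn := by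
    simp [hFdef]
  have := hstepB.trans_lt hstepA
  rw [hF0] at this
  exact this


/-- Proposition 1, part 3, second case: for `α ∈ (1/2, 1)` with
`α > k·pn/(pc + k·pn)` and `k > (2α-1)·pc/(2·(1-α)·pn)`, one has
`η = α·pc - (1-α)·k·pn > 0` and every `ε` with `2η ≤ ε < pc` has loss gap
`f(ε) < 0`; equivalently, the noisy model's mixed loss strictly exceeds the clean
model's mixed loss. -/
theorem loss_gap_neg_beyond_two_eta
    (α pc pn k : ℝ) (hpc : 0 < pc) (hpn : 0 < pn) (hk : 0 < k)
    (hα : α ∈ Set.Ioo (1 / 2 : ℝ) 1)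
    (hαgt : α > k * pn / (pc + k * pn))
    (hkgt : k > (2 * α - 1) * pc / (2 * (1 - α) * pn)) :
    0 < α * pc - (1 - α) * k * pn ∧
    ∀ ε : ℝ, 2 * (α * pc - (1 - α) * k * pn) ≤ ε → ε < pc →
      ((1 - α) * Real.log ((pc - ε) / pc) + α * Real.log ((pn + ε / k) / pn) < 0 ∧
       (1 - α) * (-Real.log (pc - ε)) + α * (-Real.log (pn + ε / k))
         > (1 - α) * (-Real.log pc) + α * (-Real.log pn)) := by
  obtain ⟨hahalf, hα1⟩ := hα
  have h1α : 0 < 1 - α := by linarith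
  have hS : 0 < pc + k * pn := by positivity
  have hη : 0 < α * pc - (1 - α) * k * pn := by
    have := (div_lt_iff₀ hS).mp hαgt
    nlinarith
  have h2η : 2 * (α * pc - (1 - α) * k * pn) < pc := by
    have hden : (0:ℝ) < 2 * (1 - α) * pn := by positivity
    have := (div_lt_iff₀ hden).mp hkgt
    nlinarith
  refine ⟨hη, fun ε hε1 hε2 => ?_⟩
  have hε0 : 0 < ε := lt_of_lt_of_le (by linarith) hε1
  have hpce : 0 < pc - ε := by linarith
  have hpne : 0 < pn + ε / k := by positivity
  have hkey := key α pc pn k hpc hpn hk hahalf hα1 hη h2η ε hε1 hε2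
  constructor
  · rw [Real.log_div hpce.ne' hpc.ne', Real.log_div hpne.ne' hpn.ne']
    nlinarith
  · nlinarith
end

section
/- Let p_c, p_n, k be positive reals, α ∈ (0,1), and η = α·p_c − (1−α)·k·p_n; assume η > 0. Then the loss-gap function f is strictly monotonically increasing on the interval [0, η] and strictly monotonically decreasing on the interval [η, p_c). -/
/-- for `α ∈ (0,1)` with `η = α·pc - (1-α)·k·pn > 0`, the loss-gap
function `f(ε) = (1-α)·log((pc-ε)/pc) + α·log((pn+ε/k)/pn)` is strictly increasing
on `[0, η]` and strictly decreasing on `[η, pc)`. -/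
theorem loss_gap_monotone
    (α pc pn k : ℝ) (hpc : 0 < pc) (hpn : 0 < pn) (hk : 0 < k)
    (hα : α ∈ Set.Ioo (0 : ℝ) 1)
    (hη : 0 < α * pc - (1 - α) * k * pn) :
    StrictMonoOn
      (fun ε : ℝ => (1 - α) * Real.log ((pc - ε) / pc) + α * Real.log ((pn + ε / k) / pn))
      (Set.Icc 0 (α * pc - (1 - α) * k * pn)) ∧
    StrictAntiOn
      (fun ε : ℝ => (1 - α) * Real.log ((pc - ε) / pc) + α * Real.log ((pn + ε / k) / pn))
      (Set.Ico (α * pc - (1 - α) * k * pn) pc) := by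
  obtain ⟨hα0, hα1⟩ := hα
  set η := α * pc - (1 - α) * k * pn with hηdef
  have hηpc : η < pc := by nlinarith [mul_pos (mul_pos (show (0:ℝ) < 1 - α by linarith) hk) hpn, mul_pos (show (0:ℝ) < 1 - α by linarith) hpc]
  set f : ℝ → ℝ :=
    fun ε : ℝ => (1 - α) * Real.log ((pc - ε) / pc) + α * Real.log ((pn + ε / k) / pn) with hf
  have hderiv : ∀ x : ℝ, 0 ≤ x → x < pc →
      HasDerivAt f (α / (k * pn + x) - (1 - α) / (pc - x)) x := by
    intro x hx0 hxpc
    have h1 : (0:ℝ) < pc - x := by linarith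
    have h2 : (0:ℝ) < pn + x / k := by positivity
    have d1 : HasDerivAt (fun ε : ℝ => (pc - ε) / pc) (-1 / pc) x := by
      simpa using ((hasDerivAt_id x).const_sub pc).div_const pc
    have d1' : HasDerivAt (fun ε : ℝ => Real.log ((pc - ε) / pc))
        ((-1 / pc) / ((pc - x) / pc)) x := d1.log (by positivity)
    have d2 : HasDerivAt (fun ε : ℝ => (pn + ε / k) / pn) ((1 / k) / pn) x := by
      simpa using (((hasDerivAt_id x).div_const k).const_add pn).div_const pn
    have d2' : HasDerivAt (fun ε : ℝ => Real.log ((pn + ε / k) / pn))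
        ((1 / k / pn) / ((pn + x / k) / pn)) x := d2.log (by positivity)
    have := (d1'.const_mul (1 - α)).add (d2'.const_mul α)
    refine this.congr_deriv ?_
    field_simp
    ring
  have hc1 : ContinuousOn f (Set.Icc 0 η) := fun x hx =>
    (hderiv x hx.1 (lt_of_le_of_lt hx.2 hηpc)).continuousAt.continuousWithinAt
  have hc2 : ContinuousOn f (Set.Ico η pc) := fun x hx =>
    (hderiv x (by linarith [hx.1]) hx.2).continuousAt.continuousWithinAt
  constructor
  · apply strictMonoOn_of_deriv_pos (convex_Icc _ _) hc1
    intro x hx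
    rw [interior_Icc] at hx
    obtain ⟨hx0, hxη⟩ := hx
    have hxpc : x < pc := lt_trans hxη hηpc
    rw [(hderiv x hx0.le hxpc).deriv]
    have h1 : (0:ℝ) < pc - x := by linarith
    have h2 : (0:ℝ) < k * pn + x := by positivity
    rw [sub_pos, div_lt_div_iff₀ h1 h2]
    nlinarith
  · apply strictAntiOn_of_deriv_neg (convex_Ico _ _) hc2
    intro x hx
    rw [interior_Ico] at hx
    obtain ⟨hxη, hxpc⟩ := hx
    have hx0 : (0:ℝ) ≤ x := by linarith
    rw [(hderiv x hx0 hxpc).deriv]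
    have h1 : (0:ℝ) < pc - x := by linarith
    have h2 : (0:ℝ) < k * pn + x := by positivity
    rw [sub_neg, div_lt_div_iff₀ h2 h1]
    nlinarith
end

section
/- Let α ∈ (0, 1/3) and let t be a real number with (1−α)/α < t ≤ (1−α)·(2−3α)/(α·(1−3α)). Then g₃(t) < 0, i.e. (1−α)·log(1 − 3α + 3(1−α)/t) + α·log(3α − 2 + 3αt) < 0. (This is the key estimate showing f(3η) < 0 in the proof of Proposition 1, part 3, via the substitution t = p_c/(k·p_n).) -/
/-- for `α ∈ (0, 1/3)` and `(1-α)/α < t ≤ (1-α)·(2-3α)/(α·(1-3α))`,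
`g₃(t) = (1-α)·log(1 - 3α + 3(1-α)/t) + α·log(3α - 2 + 3αt) < 0`. -/
theorem g3_neg
    (α t : ℝ) (hα : α ∈ Set.Ioo (0 : ℝ) (1 / 3))
    (ht1 : (1 - α) / α < t)
    (ht2 : t ≤ (1 - α) * (2 - 3 * α) / (α * (1 - 3 * α))) :
    (1 - α) * Real.log (1 - 3 * α + 3 * (1 - α) / t)
      + α * Real.log (3 * α - 2 + 3 * α * t) < 0 := by
  obtain ⟨hα0, hα3⟩ := hα
  have h1α : 0 < 1 - α := by linarith
  have h13 : 0 < 1 - 3 * α := by linarith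
  have h23 : 0 < 2 - 3 * α := by linarith
  set t₀ : ℝ := (1 - α) / α with ht₀
  set t₁ : ℝ := (1 - α) * (2 - 3 * α) / (α * (1 - 3 * α)) with ht₁
  have ht₀pos : 0 < t₀ := div_pos h1α hα0
  have ht01 : t₀ < t₁ := by
    rw [ht₀, ht₁, div_lt_div_iff₀ hα0 (mul_pos hα0 h13)]
    nlinarith
  set g : ℝ → ℝ := fun x => (1 - α) * Real.log (1 - 3 * α + 3 * (1 - α) / x)
      + α * Real.log (3 * α - 2 + 3 * α * x) with hg
  have hBpos : ∀ x : ℝ, t₀ ≤ x → (0 : ℝ) < 3 * α - 2 + 3 * α * x := by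
    intro x hx
    have h : 1 - α ≤ α * x := by
      rw [ht₀, div_le_iff₀ hα0] at hx; linarith
    linarith
  have hApos : ∀ x : ℝ, 0 < x → (0 : ℝ) < 1 - 3 * α + 3 * (1 - α) / x := by
    intro x hx
    have := div_pos (by linarith : (0 : ℝ) < 3 * (1 - α)) hx
    linarith
  have hderiv : ∀ x : ℝ, t₀ ≤ x → HasDerivAt g
      ((1 - α) * (3 * (1 - α) * (-(x ^ 2)⁻¹) / (1 - 3 * α + 3 * (1 - α) / x))
        + α * (3 * α / (3 * α - 2 + 3 * α * x))) x := by
    intro x hx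
    have hx0 : 0 < x := lt_of_lt_of_le ht₀pos hx
    have h1 : HasDerivAt (fun y : ℝ => 1 - 3 * α + 3 * (1 - α) / y)
        (3 * (1 - α) * (-(x ^ 2)⁻¹)) x := by
      have := ((hasDerivAt_inv (ne_of_gt hx0)).const_mul (3 * (1 - α))).const_add
        (1 - 3 * α)
      simpa [div_eq_mul_inv, mul_comm] using this
    have h2 : HasDerivAt (fun y : ℝ => 3 * α - 2 + 3 * α * y) (3 * α) x := by
      simpa using ((hasDerivAt_id x).const_mul (3 * α)).const_add (3 * α - 2)
    exact ((h1.log (ne_of_gt (hApos x hx0))).const_mul (1 - α)).add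
      ((h2.log (ne_of_gt (hBpos x hx))).const_mul α)
  have hanti : StrictAntiOn g (Set.Icc t₀ t₁) := by
    apply strictAntiOn_of_deriv_neg (convex_Icc _ _)
    · exact fun x hx => ((hderiv x hx.1).continuousAt).continuousWithinAt
    · intro x hx
      rw [interior_Icc] at hx
      obtain ⟨hxl, hxr⟩ := hx
      have hx0 : 0 < x := lt_trans ht₀pos hxl
      rw [(hderiv x hxl.le).deriv]
      have hA := hApos x hx0
      have hB := hBpos x hxl.le
      have hkey : (α * x - (1 - α)) * (α * (1 - 3 * α) * x - (1 - α) * (2 - 3 * α)) < 0 := by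
        apply mul_neg_of_pos_of_neg
        · rw [ht₀, div_lt_iff₀ hα0] at hxl; linarith
        · rw [ht₁, lt_div_iff₀ (mul_pos hα0 h13)] at hxr; linarith
      have hXA : 0 < x ^ 2 * (1 - 3 * α + 3 * (1 - α) / x) :=
        mul_pos (by positivity) hA
      have hlt : 3 * α ^ 2 / (3 * α - 2 + 3 * α * x)
          < 3 * (1 - α) ^ 2 / (x ^ 2 * (1 - 3 * α + 3 * (1 - α) / x)) := by
        rw [div_lt_div_iff₀ hB hXA]
        have hexp : x ^ 2 * (1 - 3 * α + 3 * (1 - α) / x)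
            = (1 - 3 * α) * x ^ 2 + 3 * (1 - α) * x := by
          field_simp
        rw [hexp]
        nlinarith [hkey]
      have he : (1 - α) * (3 * (1 - α) * (-(x ^ 2)⁻¹) / (1 - 3 * α + 3 * (1 - α) / x))
          = -(3 * (1 - α) ^ 2 / (x ^ 2 * (1 - 3 * α + 3 * (1 - α) / x))) := by
        have hAne : (1 - 3 * α + 3 * (1 - α) / x) ≠ 0 := ne_of_gt hA
        have hxne : x ≠ 0 := ne_of_gt hx0
        field_simp
      rw [he]
      have he2 : α * (3 * α / (3 * α - 2 + 3 * α * x))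
          = 3 * α ^ 2 / (3 * α - 2 + 3 * α * x) := by ring
      rw [he2]
      linarith
  have hg0 : g t₀ = 0 := by
    have e1 : 1 - 3 * α + 3 * (1 - α) / t₀ = 1 := by
      rw [ht₀]
      field_simp
      ring
    have e2 : 3 * α - 2 + 3 * α * t₀ = 1 := by
      rw [ht₀]
      field_simp
      ring
    simp [hg, e1, e2]
  have hmem : t ∈ Set.Icc t₀ t₁ := ⟨le_of_lt ht1, ht2⟩
  have hmem0 : t₀ ∈ Set.Icc t₀ t₁ := ⟨le_refl _, le_of_lt ht01⟩
  have hfinal : g t < 0 := by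
    have := hanti hmem0 hmem ht1
    rwa [hg0] at this
  exact hfinal
end

section
/- Let α ∈ (0, 1/3). Then the function g₃ is strictly decreasing on the set {t : (1−α)/α < t ≤ (1−α)·(2−3α)/(α·(1−3α))}; that is, for all s, t in this set with s < t, g₃(s) > g₃(t). -/
/-- for `α ∈ (0, 1/3)`, the function
`g₃(t) = (1-α)·log(1 - 3α + 3(1-α)/t) + α·log(3α - 2 + 3αt)` is strictly decreasing
on the set `{t : (1-α)/α < t ≤ (1-α)·(2-3α)/(α·(1-3α))}`. -/
theorem g3_strictAntiOn
    (α : ℝ) (hα : α ∈ Set.Ioo (0 : ℝ) (1 / 3)) :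
    StrictAntiOn
      (fun t : ℝ => (1 - α) * Real.log (1 - 3 * α + 3 * (1 - α) / t)
        + α * Real.log (3 * α - 2 + 3 * α * t))
      {t : ℝ | (1 - α) / α < t ∧ t ≤ (1 - α) * (2 - 3 * α) / (α * (1 - 3 * α))} := by
  obtain ⟨hα0, hα13⟩ := hα
  have h13 : 0 < 1 - 3 * α := by linarith
  have h1a : 0 < 1 - α := by linarith
  set a : ℝ := (1 - α) / α with ha_def
  set b : ℝ := (1 - α) * (2 - 3 * α) / (α * (1 - 3 * α)) with hb_def
  have ha0 : 0 < a := div_pos h1a hα0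
  have hset : {t : ℝ | a < t ∧ t ≤ b} = Set.Ioc a b := rfl
  rw [hset]
  -- positivity facts on the closed set
  have hfacts : ∀ t ∈ Set.Ioc a b, 0 < t ∧ 0 < 1 - 3 * α + 3 * (1 - α) / t ∧
      0 < 3 * α - 2 + 3 * α * t := by
    intro t ⟨ht1, ht2⟩
    have ht0 : 0 < t := lt_trans ha0 ht1
    have hat : 1 - α < α * t := (div_lt_iff₀' hα0).mp ht1
    refine ⟨ht0, ?_, by nlinarith⟩
    have : 0 < 3 * (1 - α) / t := div_pos (by linarith) ht0
    linarith
  apply strictAntiOn_of_deriv_neg (convex_Ioc a b)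
  · -- continuity
    apply ContinuousOn.add
    · apply continuousOn_const.mul
      apply ContinuousOn.log
      · exact continuousOn_const.add (continuousOn_const.div continuousOn_id
          (fun t ht => (hfacts t ht).1.ne'))
      · exact fun t ht => (hfacts t ht).2.1.ne'
    · apply continuousOn_const.mul
      apply ContinuousOn.log
      · exact continuousOn_const.add (continuousOn_const.mul continuousOn_id)
      · exact fun t ht => (hfacts t ht).2.2.ne'
  · intro x hx
    rw [interior_Ioc] at hx
    obtain ⟨hx1, hx2⟩ := hx
    obtain ⟨hx0, hA, hB⟩ := hfacts x ⟨hx1, le_of_lt hx2⟩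
    have hx2' : x ≠ 0 := hx0.ne'
    -- derivative of first argument
    have h1 : HasDerivAt (fun t : ℝ => 1 - 3 * α + 3 * (1 - α) / t)
        (3 * (1 - α) * (-(x ^ 2)⁻¹)) x := by
      have := (hasDerivAt_inv hx2').const_mul (3 * (1 - α))
      simpa [div_eq_mul_inv] using this.const_add (1 - 3 * α)
    have h2 : HasDerivAt (fun t : ℝ => 3 * α - 2 + 3 * α * t) (3 * α) x := by
      simpa using ((hasDerivAt_id x).const_mul (3 * α)).const_add (3 * α - 2)
    have hd : HasDerivAt
        (fun t : ℝ => (1 - α) * Real.log (1 - 3 * α + 3 * (1 - α) / t)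
          + α * Real.log (3 * α - 2 + 3 * α * t))
        ((1 - α) * ((3 * (1 - α) * (-(x ^ 2)⁻¹)) / (1 - 3 * α + 3 * (1 - α) / x))
          + α * (3 * α / (3 * α - 2 + 3 * α * x))) x := by
      exact ((h1.log hA.ne').const_mul (1 - α)).add ((h2.log hB.ne').const_mul α)
    rw [hd.deriv]
    -- show the derivative is negative
    set A : ℝ := 1 - 3 * α + 3 * (1 - α) / x with hA_def
    set B : ℝ := 3 * α - 2 + 3 * α * x with hB_def
    have hx2A : 0 < x ^ 2 * A := by positivity
    have key : 3 * α ^ 2 / B < 3 * (1 - α) ^ 2 / (x ^ 2 * A) := by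
      rw [div_lt_div_iff₀ hB hx2A]
      have hxa : 1 - α < α * x := (div_lt_iff₀' hα0).mp hx1
      have hxb : α * (1 - 3 * α) * x < (1 - α) * (2 - 3 * α) := by
        have := (lt_div_iff₀ (by positivity : (0:ℝ) < α * (1 - 3 * α))).mp hx2
        nlinarith
      have hAx : x ^ 2 * A = (1 - 3 * α) * x ^ 2 + 3 * (1 - α) * x := by
        rw [hA_def]; field_simp
      rw [hAx, hB_def]
      nlinarith [mul_pos (by linarith : 0 < α * x - (1 - α))
        (by linarith : 0 < (1 - α) * (2 - 3 * α) - α * (1 - 3 * α) * x)]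
    have heq : (1 - α) * ((3 * (1 - α) * (-(x ^ 2)⁻¹)) / A) + α * (3 * α / B)
        = 3 * α ^ 2 / B - 3 * (1 - α) ^ 2 / (x ^ 2 * A) := by
      field_simp
      ring
    rw [heq]
    linarith
end

section
/- Let α ∈ (1/2, 1) and let t be a real number with (1−α)/α < t < 2(1−α)/(2α−1). Then g₂(t) < 0, i.e. (1−α)·log(1 − 2α + 2(1−α)/t) + α·log(2α − 1 + 2αt) < 0. (This is the key estimate showing f(2η) < 0 in the proof of Proposition 1, part 3, via the substitution t = p_c/(k·p_n).) -/
open Real Set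

/-- for `α ∈ (1/2, 1)` and `(1-α)/α < t < 2(1-α)/(2α-1)`,
`g₂(t) = (1-α)·log(1 - 2α + 2(1-α)/t) + α·log(2α - 1 + 2αt) < 0`. -/
theorem g2_neg
    (α t : ℝ) (hα : α ∈ Set.Ioo (1 / 2 : ℝ) 1)
    (ht1 : (1 - α) / α < t)
    (ht2 : t < 2 * (1 - α) / (2 * α - 1)) :
    (1 - α) * Real.log (1 - 2 * α + 2 * (1 - α) / t)
      + α * Real.log (2 * α - 1 + 2 * α * t) < 0 := by
  obtain ⟨hα1, hα2⟩ := hα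
  have hα0 : 0 < α := by linarith
  have h2a : 0 < 2 * α - 1 := by linarith
  have h1a : 0 < 1 - α := by linarith
  have ht₀pos : 0 < (1 - α) / α := div_pos h1a hα0
  have ht0 : 0 < t := ht₀pos.trans ht1
  have htub : t * (2 * α - 1) < 2 * (1 - α) := (lt_div_iff₀ h2a).mp ht2
  set f : ℝ → ℝ := fun u => (1 - α) * Real.log (1 - 2 * α + 2 * (1 - α) / u)
      + α * Real.log (2 * α - 1 + 2 * α * u) with hf
  have hgpos : ∀ u ∈ Icc ((1 - α) / α) t, 0 < 1 - 2 * α + 2 * (1 - α) / u := by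
    intro u hu
    have hu0 : 0 < u := lt_of_lt_of_le ht₀pos hu.1
    have h1 : u * (2 * α - 1) < 2 * (1 - α) := by nlinarith [hu.2]
    have h2 : 2 * α - 1 < 2 * (1 - α) / u := (lt_div_iff₀ hu0).mpr (by nlinarith)
    linarith
  have hhpos : ∀ u ∈ Icc ((1 - α) / α) t, 0 < 2 * α - 1 + 2 * α * u := by
    intro u hu
    have hu0 : 0 < u := lt_of_lt_of_le ht₀pos hu.1
    nlinarith
  have hcont : ContinuousOn f (Icc ((1 - α) / α) t) := by
    apply ContinuousOn.add
    · apply continuousOn_const.mul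
      apply ContinuousOn.log
      · exact continuousOn_const.add (continuousOn_const.div continuousOn_id
          fun u hu => (lt_of_lt_of_le ht₀pos hu.1).ne')
      · exact fun u hu => (hgpos u hu).ne'
    · apply continuousOn_const.mul
      apply ContinuousOn.log
      · exact continuousOn_const.add (continuous_const.mul continuous_id).continuousOn
      · exact fun u hu => (hhpos u hu).ne'
  have hanti : StrictAntiOn f (Icc ((1 - α) / α) t) := by
    apply strictAntiOn_of_deriv_neg (convex_Icc _ _) hcont
    intro u hu
    rw [interior_Icc] at hu
    have hu0 : 0 < u := lt_of_lt_of_le ht₀pos hu.1.le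
    have hg := hgpos u ⟨hu.1.le, hu.2.le⟩
    have hh := hhpos u ⟨hu.1.le, hu.2.le⟩
    have hua : 1 - α < u * α := (div_lt_iff₀ hα0).mp hu.1
    have hder : HasDerivAt f
        ((1 - α) * ((2 * (1 - α)) * (-(u ^ 2)⁻¹) / (1 - 2 * α + 2 * (1 - α) / u))
          + α * (2 * α / (2 * α - 1 + 2 * α * u))) u := by
      have d1 : HasDerivAt (fun v : ℝ => 1 - 2 * α + 2 * (1 - α) / v)
          ((2 * (1 - α)) * (-(u ^ 2)⁻¹)) u := by
        have := (hasDerivAt_inv hu0.ne').const_mul (2 * (1 - α))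
        simpa [div_eq_mul_inv] using this.const_add (1 - 2 * α)
      have d2 : HasDerivAt (fun v : ℝ => 2 * α - 1 + 2 * α * v) (2 * α) u := by
        simpa using ((hasDerivAt_id u).const_mul (2 * α)).const_add (2 * α - 1)
      exact ((d1.log hg.ne').const_mul (1 - α)).add ((d2.log hh.ne').const_mul α)
    rw [hder.deriv]
    have hsq : 0 < (u * α - (1 - α)) ^ 2 := pow_pos (by linarith) 2
    have hkey : (2 * α ^ 2) / (2 * α - 1 + 2 * α * u)
        < (2 * (1 - α) ^ 2) / (u ^ 2 * (1 - 2 * α + 2 * (1 - α) / u)) := by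
      rw [div_lt_div_iff₀ hh (by positivity)]
      have hgu : u ^ 2 * (1 - 2 * α + 2 * (1 - α) / u)
          = (1 - 2 * α) * u ^ 2 + 2 * (1 - α) * u := by
        field_simp
      rw [hgu]
      nlinarith [mul_pos h2a hsq]
    have e1 : (1 - α) * ((2 * (1 - α)) * (-(u ^ 2)⁻¹) / (1 - 2 * α + 2 * (1 - α) / u))
        = -((2 * (1 - α) ^ 2) * ((u ^ 2)⁻¹ * (1 - 2 * α + 2 * (1 - α) / u)⁻¹)) := by
      rw [div_eq_mul_inv]; ring
    have e2 : α * (2 * α / (2 * α - 1 + 2 * α * u))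
        = 2 * α ^ 2 * (2 * α - 1 + 2 * α * u)⁻¹ := by
      rw [div_eq_mul_inv]; ring
    rw [div_eq_mul_inv, div_eq_mul_inv, mul_inv] at hkey
    rw [e1, e2]
    linarith
  have hmem1 : (1 - α) / α ∈ Icc ((1 - α) / α) t := ⟨le_refl _, ht1.le⟩
  have hmem2 : t ∈ Icc ((1 - α) / α) t := ⟨ht1.le, le_refl _⟩
  have h0 : f ((1 - α) / α) = 0 := by
    have e3 : 2 * (1 - α) / ((1 - α) / α) = 2 * α := by
      rw [div_div_eq_mul_div, mul_comm, mul_div_assoc, mul_div_assoc,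
        div_self h1a.ne', mul_one]
      ring
    have e4 : 2 * α * ((1 - α) / α) = 2 * (1 - α) := by
      rw [mul_comm, div_mul_eq_mul_div, div_eq_iff hα0.ne']
      ring
    simp only [hf]
    rw [e3, e4, show (1:ℝ) - 2 * α + 2 * α = 1 by ring,
      show 2 * α - 1 + 2 * (1 - α) = (1:ℝ) by ring, Real.log_one]
    ring
  have hfin := hanti hmem1 hmem2 ht1
  rw [h0] at hfin
  simpa only [hf] using hfin
end

section
/- Let α ∈ (1/2, 1). Then the function g₂ is strictly decreasing on the open interval ((1−α)/α, 2(1−α)/(2α−1)); that is, for all s, t in this interval with s < t, g₂(s) > g₂(t). -/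
/-- for `α ∈ (1/2, 1)`, the function
`g₂(t) = (1-α)·log(1 - 2α + 2(1-α)/t) + α·log(2α - 1 + 2αt)` is strictly decreasing
on the open interval `((1-α)/α, 2(1-α)/(2α-1))`. -/
theorem g2_strictAntiOn
    (α : ℝ) (hα : α ∈ Set.Ioo (1 / 2 : ℝ) 1) :
    StrictAntiOn
      (fun t : ℝ => (1 - α) * Real.log (1 - 2 * α + 2 * (1 - α) / t)
        + α * Real.log (2 * α - 1 + 2 * α * t))
      (Set.Ioo ((1 - α) / α) (2 * (1 - α) / (2 * α - 1))) := by
  obtain ⟨hα1, hα2⟩ := hα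
  have h2α : 0 < 2 * α - 1 := by linarith
  have h1α : 0 < 1 - α := by linarith
  have hαpos : 0 < α := by linarith
  have main : ∀ t ∈ Set.Ioo ((1 - α) / α) (2 * (1 - α) / (2 * α - 1)),
      HasDerivAt (fun t : ℝ => (1 - α) * Real.log (1 - 2 * α + 2 * (1 - α) / t)
        + α * Real.log (2 * α - 1 + 2 * α * t))
      ((1 - α) * (2 * (1 - α) * (-(t ^ 2)⁻¹) / (1 - 2 * α + 2 * (1 - α) / t))
        + α * (2 * α / (2 * α - 1 + 2 * α * t))) t ∧
      ((1 - α) * (2 * (1 - α) * (-(t ^ 2)⁻¹) / (1 - 2 * α + 2 * (1 - α) / t))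
        + α * (2 * α / (2 * α - 1 + 2 * α * t))) < 0 := by
    intro t ht
    have htp : 0 < t := lt_trans (div_pos h1α hαpos) ht.1
    have hb : t * (2 * α - 1) < 2 * (1 - α) := (lt_div_iff₀ h2α).mp ht.2
    have ha : 1 - α < t * α := (div_lt_iff₀ hαpos).mp ht.1
    have hA : 0 < 1 - 2 * α + 2 * (1 - α) / t := by
      have : (2 * α - 1) < 2 * (1 - α) / t := by
        rw [lt_div_iff₀ htp]; nlinarith
      linarith
    have hB : 0 < 2 * α - 1 + 2 * α * t := by nlinarith
    constructor
    · have d1 : HasDerivAt (fun t : ℝ => 2 * (1 - α) / t) (2 * (1 - α) * (-(t ^ 2)⁻¹)) t := by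
        simpa [div_eq_mul_inv] using (hasDerivAt_inv htp.ne').const_mul (2 * (1 - α))
      have d2 : HasDerivAt (fun t : ℝ => 1 - 2 * α + 2 * (1 - α) / t)
          (2 * (1 - α) * (-(t ^ 2)⁻¹)) t := d1.const_add _
      have d3 := (d2.log hA.ne').const_mul (1 - α)
      have d4 : HasDerivAt (fun t : ℝ => 2 * α - 1 + 2 * α * t) (2 * α) t := by
        simpa using ((hasDerivAt_id t).const_mul (2 * α)).const_add (2 * α - 1)
      have d5 := (d4.log hB.ne').const_mul α
      exact d3.add d5
    · have hC : 0 < (1 - 2 * α) * t + 2 * (1 - α) := by nlinarith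
      have hA2 : 1 - 2 * α + 2 * (1 - α) / t = ((1 - 2 * α) * t + 2 * (1 - α)) / t := by
        field_simp
      rw [hA2]
      have heq : ((1 - α) * (2 * (1 - α) * (-(t ^ 2)⁻¹) / (((1 - 2 * α) * t + 2 * (1 - α)) / t))
          + α * (2 * α / (2 * α - 1 + 2 * α * t)))
          = -(2 * (2 * α - 1) * (α * t - (1 - α)) ^ 2)
            / ((t * ((1 - 2 * α) * t + 2 * (1 - α))) * (2 * α - 1 + 2 * α * t)) := by
        rw [div_div_eq_mul_div]
        field_simp [htp.ne', hC.ne', hB.ne']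
        rw [neg_div', div_add_div _ _ (ne_of_gt (by linarith)) (ne_of_gt (by linarith)), neg_div',
          div_eq_div_iff (ne_of_gt (mul_pos (by linarith) (by linarith))) (ne_of_gt (mul_pos (by linarith) (by linarith)))]
        ring
      rw [heq]
      apply div_neg_of_neg_of_pos
      · have hd : 0 < α * t - (1 - α) := by nlinarith
        nlinarith [mul_pos h2α (pow_pos hd 2)]
      · positivity
  apply strictAntiOn_of_deriv_neg (convex_Ioo _ _)
  · exact fun x hx => ((main x hx).1).differentiableAt.continuousAt.continuousWithinAt
  · rw [interior_Ioo]
    intro x hx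
    rw [(main x hx).1.deriv]
    exact (main x hx).2
end

section
/- Let E be a real inner product space that is a complete normed space, let β ≥ 0, and let f : E → ℝ be a differentiable function that is nonnegative (f(x) ≥ 0 for all x) and β-smooth, i.e. its gradient is β-Lipschitz: ‖∇f(x) − ∇f(x')‖ ≤ β·‖x − x'‖ for all x, x' ∈ E. Then for every x ∈ E, ‖∇f(x)‖² ≤ 4β·f(x). -/
open InnerProductSpace

lemma descent_aux
    {E : Type*} [NormedAddCommGroup E] [InnerProductSpace ℝ E] [CompleteSpace E]
    (β : ℝ) (hβ : 0 ≤ β)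
    (f : E → ℝ) (hdiff : Differentiable ℝ f)
    (hsmooth : ∀ x x' : E, ‖gradient f x - gradient f x'‖ ≤ β * ‖x - x'‖)
    (x y : E) :
    f y ≤ f x + inner ℝ (gradient f x) (y - x) + β * ‖y - x‖ ^ 2 := by
  set g := gradient f x with hg
  set φ : E → ℝ := fun z => f z - inner ℝ g z with hφ
  have hfd : ∀ z : E, HasFDerivAt φ ((toDual ℝ E (gradient f z - g) : E →L[ℝ] ℝ)) z := by
    intro z
    have h1 : HasFDerivAt f ((toDual ℝ E (gradient f z) : E →L[ℝ] ℝ)) z :=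
      ((hdiff z).hasGradientAt).hasFDerivAt
    have h2 : HasFDerivAt (fun z : E => (inner ℝ g z : ℝ))
        ((toDual ℝ E g : E →L[ℝ] ℝ)) z :=
      (toDual ℝ E g : E →L[ℝ] ℝ).hasFDerivAt
    have h3 := h1.sub h2
    rw [← map_sub] at h3
    exact h3
  have key : ‖φ y - φ x‖ ≤ (β * ‖y - x‖) * ‖y - x‖ := by
    apply Convex.norm_image_sub_le_of_norm_hasFDerivWithin_le
      (f' := fun z => (toDual ℝ E (gradient f z - g) : E →L[ℝ] ℝ))
      (fun z _ => (hfd z).hasFDerivWithinAt) _ (convex_segment x y)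
      (left_mem_segment ℝ x y) (right_mem_segment ℝ x y)
    intro z hz
    have hnorm : ‖(toDual ℝ E (gradient f z - g) : E →L[ℝ] ℝ)‖ = ‖gradient f z - g‖ := by
      exact (toDual ℝ E).norm_map _
    rw [hnorm]
    refine (hsmooth z x).trans (mul_le_mul_of_nonneg_left ?_ hβ)
    obtain ⟨a, b, ha, hb, hab, rfl⟩ := hz
    have heq : a • x + b • y - x = b • (y - x) := by
      have : a = 1 - b := by linarith
      rw [this]; module
    rw [heq, norm_smul]
    have hb1 : b ≤ 1 := by linarith
    calc ‖b‖ * ‖y - x‖ ≤ 1 * ‖y - x‖ := by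
          apply mul_le_mul_of_nonneg_right _ (norm_nonneg _)
          rw [Real.norm_eq_abs, abs_of_nonneg hb]; exact hb1
      _ = ‖y - x‖ := one_mul _
  have hineq : φ y - φ x ≤ β * ‖y - x‖ ^ 2 := by
    calc φ y - φ x ≤ ‖φ y - φ x‖ := le_abs_self _
      _ ≤ (β * ‖y - x‖) * ‖y - x‖ := key
      _ = β * ‖y - x‖ ^ 2 := by ring
  have hinner : (inner ℝ g y : ℝ) - inner ℝ g x = inner ℝ g (y - x) := by
    rw [inner_sub_right]
  simp only [hφ] at hineq
  linarith [hinner]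

/-- Lemma 2: on a real Hilbert space `E`, if `f : E → ℝ` is
differentiable, nonnegative, and `β`-smooth (its gradient is `β`-Lipschitz), then
`‖∇f(x)‖² ≤ 4β·f(x)` for all `x`. -/
theorem sq_norm_gradient_le_of_smooth_nonneg
    {E : Type*} [NormedAddCommGroup E] [InnerProductSpace ℝ E] [CompleteSpace E]
    (β : ℝ) (hβ : 0 ≤ β)
    (f : E → ℝ) (hdiff : Differentiable ℝ f)
    (hnonneg : ∀ x, 0 ≤ f x)
    (hsmooth : ∀ x x' : E, ‖gradient f x - gradient f x'‖ ≤ β * ‖x - x'‖) :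
    ∀ x : E, ‖gradient f x‖ ^ 2 ≤ 4 * β * f x := by
  intro x
  set g := gradient f x with hg
  have key : ∀ t : ℝ, 0 ≤ t →
      0 ≤ f x - t * ‖g‖ ^ 2 + β * t ^ 2 * ‖g‖ ^ 2 := by
    intro t ht
    have h := descent_aux β hβ f hdiff hsmooth x (x - t • g)
    have h1 : (x - t • g) - x = -(t • g) := by abel
    rw [h1] at h
    have h2 : (inner ℝ g (-(t • g)) : ℝ) = -(t * ‖g‖ ^ 2) := by
      rw [inner_neg_right, real_inner_smul_right, real_inner_self_eq_norm_sq]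
    have h3 : ‖-(t • g)‖ ^ 2 = t ^ 2 * ‖g‖ ^ 2 := by
      rw [norm_neg, norm_smul, mul_pow, Real.norm_eq_abs, sq_abs]
    rw [h2, h3] at h
    have := hnonneg (x - t • g)
    nlinarith
  rcases eq_or_lt_of_le hβ with hβ0 | hβpos
  · -- β = 0
    have hgz : ‖g‖ = 0 := by
      by_contra hne
      have hgpos : 0 < ‖g‖ ^ 2 := by positivity
      set t := (f x + 1) / ‖g‖ ^ 2 with ht
      have htpos : 0 ≤ t := div_nonneg (by linarith [hnonneg x]) (le_of_lt hgpos)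
      have := key t htpos
      rw [← hβ0] at this
      have : t * ‖g‖ ^ 2 ≤ f x := by linarith
      rw [ht, div_mul_cancel₀ _ (ne_of_gt hgpos)] at this
      linarith
    rw [hgz, ← hβ0]
    simp [hnonneg x]
  · -- β > 0
    have := key (1 / (2 * β)) (by positivity)
    have h2β : (2 * β) ≠ 0 := by positivity
    have e1 : (1 / (2 * β)) * ‖g‖ ^ 2 = ‖g‖ ^ 2 / (2 * β) := by ring
    have e2 : β * (1 / (2 * β)) ^ 2 * ‖g‖ ^ 2 = ‖g‖ ^ 2 / (4 * β) := by
      field_simp; ring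
    rw [e1, e2] at this
    have h4β : 0 < 4 * β := by positivity
    have hdd : ‖g‖ ^ 2 / (2 * β) - ‖g‖ ^ 2 / (4 * β) = ‖g‖ ^ 2 / (4 * β) := by
      field_simp; ring
    have hle : ‖g‖ ^ 2 / (4 * β) ≤ f x := by linarith
    rw [div_le_iff₀ h4β] at hle
    linarith
end
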